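/- Let Z_∞ := π_∞(0) and let γ = [[a,b],[c,d]] ∈ GL₂(ℚ). Then in Ξ₀: if c ≠ 0, [Z_∞, γ⁻¹·Z_∞] = [π_∞(0), π_{−d/c}(∞)] − γ⁻¹·[π_∞(0), π_∞(a/c)]; and if c = 0, [Z_∞, γ⁻¹·Z_∞] = [π_∞(0), π_∞(−b/a)]. -/

import Mathlib

noncomputable section

open scoped MatrixGroups

/-- The projective line over `ℚ`, i.e. `P¹(ℚ)`. -/
abbrev P1 : Type := Projectivization ℚ (Fin 2 → ℚ)

namespace PaperMS

/-- The linear automorphism of `ℚ²` attached to `γ ∈ GL₂(ℚ)`. -/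
def glEquiv (γ : GL (Fin 2) ℚ) : (Fin 2 → ℚ) ≃ₗ[ℚ] (Fin 2 → ℚ) :=
  LinearMap.GeneralLinearGroup.generalLinearEquiv ℚ (Fin 2 → ℚ)
    (Matrix.GeneralLinearGroup.toLin γ)

lemma glEquiv_one : glEquiv 1 = LinearEquiv.refl ℚ (Fin 2 → ℚ) := by
  simp only [glEquiv, map_one]
  rfl

lemma glEquiv_mul (γ δ : GL (Fin 2) ℚ) :
    glEquiv (γ * δ) = (glEquiv δ).trans (glEquiv γ) := by
  simp only [glEquiv, map_mul]
  rfl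

/-- The Möbius action of `GL₂(ℚ)` on `P¹(ℚ)`. -/
instance : MulAction (GL (Fin 2) ℚ) P1 where
  smul γ := Projectivization.map (glEquiv γ).toLinearMap (glEquiv γ).injective
  one_smul x := by
    induction x using Projectivization.ind with
    | h v hv =>
      show Projectivization.map _ _ _ = _
      rw [Projectivization.map_mk]
      simp [glEquiv_one]
  mul_smul γ δ x := by
    induction x using Projectivization.ind with
    | h v hv =>
      show Projectivization.map _ _ _ =
        Projectivization.map _ _ (Projectivization.map _ _ _)
      rw [Projectivization.map_mk, Projectivization.map_mk, Projectivization.map_mk]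
      simp [glEquiv_mul]

lemma smul_P1_def (γ : GL (Fin 2) ℚ) (x : P1) :
    γ • x = Projectivization.map (glEquiv γ).toLinearMap (glEquiv γ).injective x := rfl

/-- The point of `P¹(ℚ)` attached to a rational number. -/
def ptQ (x : ℚ) : P1 :=
  Projectivization.mk ℚ ![x, 1] (by
    intro h
    have := congrFun h 1
    simp at this)

/-- The point `∞` of `P¹(ℚ)`. -/
def ptInf : P1 :=
  Projectivization.mk ℚ ![1, 0] (by
    intro h
    have := congrFun h 0
    simp at this)

lemma ptQ_ne_ptInf (x : ℚ) : ptQ x ≠ ptInf := by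
  intro h
  rw [ptQ, ptInf, Projectivization.mk_eq_mk_iff] at h
  obtain ⟨a, ha⟩ := h
  have := congrFun ha 1
  simp at this

/-- The set `𝒫(ℚ)` of infinitesimal cusps `π_r(s)`: ordered pairs of distinct
points of `P¹(ℚ)`; the symbol `π_r(s)` corresponds to the pair `(r, s)`. -/
def PP : Type := {p : P1 × P1 // p.1 ≠ p.2}

/-- The infinitesimal cusp `π_r(s)`. -/
def pi' (r s : P1) (h : r ≠ s) : PP := ⟨(r, s), h⟩

instance : MulAction (GL (Fin 2) ℚ) PP where
  smul γ p := ⟨(γ • p.val.1, γ • p.val.2), fun h => p.prop (MulAction.injective γ h)⟩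
  one_smul p := by
    apply Subtype.ext
    show (((1 : GL (Fin 2) ℚ) • p.val.1, (1 : GL (Fin 2) ℚ) • p.val.2) : P1 × P1) = p.val
    simp
  mul_smul γ δ p := by
    apply Subtype.ext
    show ((((γ * δ) : GL (Fin 2) ℚ) • p.val.1, ((γ * δ) : GL (Fin 2) ℚ) • p.val.2) : P1 × P1) = _
    simp [mul_smul]
    rfl

/-- `Ξ`, the group of divisors on `𝒫(ℚ)`. -/
abbrev Xi : Type := PP →₀ ℤ

/-- `Δ`, the group of divisors on `P¹(ℚ)`. -/
abbrev Delta : Type := P1 →₀ ℤ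

/-- `GL₂(ℚ)` acts on divisors on `𝒫(ℚ)`. -/
instance : MulAction (GL (Fin 2) ℚ) Xi where
  smul γ v := Finsupp.mapDomain (γ • ·) v
  one_smul v := by
    show Finsupp.mapDomain _ _ = _
    simp only [one_smul]
    exact Finsupp.mapDomain_id
  mul_smul γ δ v := by
    show Finsupp.mapDomain _ _ = Finsupp.mapDomain _ (Finsupp.mapDomain _ _)
    rw [← Finsupp.mapDomain_comp]
    congr 1
    funext x
    simp [mul_smul]

/-- `GL₂(ℚ)` acts on divisors on `P¹(ℚ)`. -/
instance : MulAction (GL (Fin 2) ℚ) Delta where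
  smul γ v := Finsupp.mapDomain (γ • ·) v
  one_smul v := by
    show Finsupp.mapDomain _ _ = _
    simp only [one_smul]
    exact Finsupp.mapDomain_id
  mul_smul γ δ v := by
    show Finsupp.mapDomain _ _ = Finsupp.mapDomain _ (Finsupp.mapDomain _ _)
    rw [← Finsupp.mapDomain_comp]
    congr 1
    funext x
    simp [mul_smul]

/-- The degree of a divisor on `𝒫(ℚ)`. -/
def degXi : Xi →+ ℤ := Finsupp.liftAddHom fun _ => AddMonoidHom.id ℤ

/-- The degree of a divisor on `P¹(ℚ)`. -/
def degDelta : Delta →+ ℤ := Finsupp.liftAddHom fun _ => AddMonoidHom.id ℤ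

/-- `Ξ₀`, the subgroup of degree-zero divisors on `𝒫(ℚ)`. -/
def Xi0 : AddSubgroup Xi := degXi.ker

/-- `Δ₀`, the subgroup of degree-zero divisors on `P¹(ℚ)`. -/
def Delta0 : AddSubgroup Delta := degDelta.ker

/-- The divisor attached to a point of `𝒫(ℚ)`. -/
def dv (p : PP) : Xi := Finsupp.single p 1

/-- The divisor attached to a point of `P¹(ℚ)`. -/
def dvP (r : P1) : Delta := Finsupp.single r 1

/-- `[c₁, c₂] = {c₂} - {c₁} ∈ Ξ₀`. -/
def br (c₁ c₂ : PP) : Xi := dv c₂ - dv c₁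

/-- The modular symbol `{r, s} = [π_r(s), π_s(r)]`. -/
def msym (r s : P1) (h : r ≠ s) : Xi := br (pi' r s h) (pi' s r h.symm)

/-- The infinitesimal symbol `[s, t]_r = [π_r(s), π_r(t)]`. -/
def isym (r s t : P1) (hs : s ≠ r) (ht : t ≠ r) : Xi :=
  br (pi' r s hs.symm) (pi' r t ht.symm)

lemma degXi_single (p : PP) (n : ℤ) : degXi (Finsupp.single p n) = n := by
  simp [degXi]

lemma degDelta_single (r : P1) (n : ℤ) : degDelta (Finsupp.single r n) = n := by
  simp [degDelta]

lemma br_mem_Xi0 (c₁ c₂ : PP) : br c₁ c₂ ∈ Xi0 := by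
  simp [br, Xi0, AddMonoidHom.mem_ker, dv, degXi_single]

lemma smul_mem_Xi0 (γ : GL (Fin 2) ℚ) {v : Xi} (hv : v ∈ Xi0) : γ • v ∈ Xi0 := by
  have h : degXi (γ • v) = degXi v := by
    show degXi (Finsupp.mapDomain (γ • ·) v) = degXi v
    simp only [degXi, Finsupp.liftAddHom_apply]
    exact Finsupp.sum_mapDomain_index (fun _ => rfl) (fun _ _ _ => rfl)
  simpa [Xi0, AddMonoidHom.mem_ker, h] using hv

lemma smul_mem_Delta0 (γ : GL (Fin 2) ℚ) {v : Delta} (hv : v ∈ Delta0) : γ • v ∈ Delta0 := by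
  have h : degDelta (γ • v) = degDelta v := by
    show degDelta (Finsupp.mapDomain (γ • ·) v) = degDelta v
    simp only [degDelta, Finsupp.liftAddHom_apply]
    exact Finsupp.sum_mapDomain_index (fun _ => rfl) (fun _ _ _ => rfl)
  simpa [Delta0, AddMonoidHom.mem_ker, h] using hv

lemma brP_mem_Delta0 (r s : P1) : dvP s - dvP r ∈ Delta0 := by
  simp [Delta0, AddMonoidHom.mem_ker, dvP, degDelta_single]

/-- The boundary map `∂ : Ξ → Δ`, induced by `π_r(s) ↦ r`. -/
def bdry : Xi →+ Delta := Finsupp.mapDomain.addMonoidHom fun p : PP => p.val.1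

/-- The embedding of `SL₂(ℤ)` in `GL₂(ℚ)`. -/
def toGLQ : SL(2, ℤ) →* GL (Fin 2) ℚ :=
  Matrix.SpecialLinearGroup.toGL.comp (Matrix.SpecialLinearGroup.map (Int.castRingHom ℚ))

end PaperMS

namespace PaperMS

/-- The base infinitesimal cusp `Z_∞ = π_∞(0)`. -/
def Zinf : PP := pi' ptInf (ptQ 0) (ptQ_ne_ptInf 0).symm

/-! For `c ≠ 0` the Möbius map `γ` sends `-d/c` to `∞` and `∞` to `a/c`, so
`γ⁻¹·π_∞(a/c) = π_{-d/c}(∞)`, and the identity is the cocycle relation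
`[x, y] = [x, z] - [y, z]` for `x = Z_∞`, `y = γ⁻¹·Z_∞`, `z = γ⁻¹·π_∞(a/c)`.
For `c = 0`, `γ` fixes `∞` and sends `-b/a` to `0`, so `γ⁻¹·Z_∞ = π_∞(-b/a)`. -/

lemma mk_eq_ptQ {v : Fin 2 → ℚ} (hv : v ≠ 0) (h1 : v 1 ≠ 0) :
    Projectivization.mk ℚ v hv = ptQ (v 0 / v 1) := by
  rw [ptQ, Projectivization.mk_eq_mk_iff]
  refine ⟨Units.mk0 (v 1) h1, funext fun i => ?_⟩
  fin_cases i <;> simp [Units.smul_def, mul_div_cancel₀ _ h1]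

lemma mk_eq_ptInf {v : Fin 2 → ℚ} (hv : v ≠ 0) (h1 : v 1 = 0) :
    Projectivization.mk ℚ v hv = ptInf := by
  have h0 : v 0 ≠ 0 := fun h0 => hv (funext fun i => by fin_cases i <;> assumption)
  rw [ptInf, Projectivization.mk_eq_mk_iff]
  refine ⟨Units.mk0 (v 0) h0, funext fun i => ?_⟩
  fin_cases i <;> simp [Units.smul_def, h1]

lemma smul_mk (γ : GL (Fin 2) ℚ) {v : Fin 2 → ℚ} (hv : v ≠ 0) :
    γ • Projectivization.mk ℚ v hv =
      Projectivization.mk ℚ ((γ : Matrix (Fin 2) (Fin 2) ℚ).mulVec v)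
        fun h => hv (Matrix.mulVec_injective_of_isUnit γ.isUnit
          (h.trans (Matrix.mulVec_zero _).symm)) := by
  rw [smul_P1_def, Projectivization.map_mk]
  rfl

section Moebius

variable {γ : GL (Fin 2) ℚ} {a b c d : ℚ} (hγ : (γ : Matrix (Fin 2) (Fin 2) ℚ) = !![a, b; c, d])
include hγ

lemma det_ne_zero_of_coe_eq : a * d - b * c ≠ 0 := by
  have h := (Matrix.isUnit_iff_isUnit_det _).mp γ.isUnit
  rw [hγ, Matrix.det_fin_two_of] at h
  exact h.ne_zero

lemma smul_ptInf_of_ne_zero (hc : c ≠ 0) : γ • ptInf = ptQ (a / c) := by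
  rw [ptInf, smul_mk, mk_eq_ptQ] <;> simp [hγ, hc]

lemma smul_ptInf_of_eq_zero (hc : c = 0) : γ • ptInf = ptInf :=
  (smul_mk γ _).trans (mk_eq_ptInf _ (by simp [hγ, hc]))

lemma smul_ptQ_of_ne_zero {x : ℚ} (hx : c * x + d ≠ 0) :
    γ • ptQ x = ptQ ((a * x + b) / (c * x + d)) := by
  rw [ptQ, smul_mk, mk_eq_ptQ] <;> simp [hγ, hx, mul_comm x]

lemma smul_ptQ_of_eq_zero {x : ℚ} (hx : c * x + d = 0) : γ • ptQ x = ptInf :=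
  (smul_mk γ _).trans (mk_eq_ptInf _ (by simp [hγ, hx, mul_comm x]))

end Moebius

lemma smul_pi'_eq {γ : GL (Fin 2) ℚ} {r s r' s' : P1} {h : r ≠ s} {h' : r' ≠ s'}
    (hr : γ • r = r') (hs : γ • s = s') : γ • pi' r s h = pi' r' s' h' := by
  subst hr hs
  rfl

lemma smul_dv (γ : GL (Fin 2) ℚ) (p : PP) : γ • dv p = dv (γ • p) :=
  Finsupp.mapDomain_single

lemma smul_br (γ : GL (Fin 2) ℚ) (c₁ c₂ : PP) : γ • br c₁ c₂ = br (γ • c₁) (γ • c₂) := by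
  rw [br, br, ← smul_dv, ← smul_dv]
  exact map_sub (Finsupp.mapDomain.addMonoidHom (γ • · : PP → PP)) _ _

lemma br_sub_br (c₁ c₂ c₃ : PP) : br c₁ c₃ - br c₂ c₃ = br c₁ c₂ := by
  simp only [br]
  abel

/-- Let `Z_∞ := π_∞(0)` and `γ = [[a,b],[c,d]] ∈ GL₂(ℚ)`.  Then in `Ξ₀`:
if `c ≠ 0`, `[Z_∞, γ⁻¹·Z_∞] = [π_∞(0), π_{-d/c}(∞)] - γ⁻¹·[π_∞(0), π_∞(a/c)]`;
and if `c = 0`, `[Z_∞, γ⁻¹·Z_∞] = [π_∞(0), π_∞(-b/a)]`. -/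
theorem statement4 (γ : GL (Fin 2) ℚ) (a b c d : ℚ)
    (hγ : (γ : Matrix (Fin 2) (Fin 2) ℚ) = !![a, b; c, d]) :
    (c ≠ 0 →
      br Zinf (γ⁻¹ • Zinf) =
        br Zinf (pi' (ptQ (-d / c)) ptInf (ptQ_ne_ptInf _)) -
          γ⁻¹ • br Zinf (pi' ptInf (ptQ (a / c)) (ptQ_ne_ptInf _).symm)) ∧
    (c = 0 →
      br Zinf (γ⁻¹ • Zinf) =
        br Zinf (pi' ptInf (ptQ (-b / a)) (ptQ_ne_ptInf _).symm)) := by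
  constructor
  · intro hc
    have hpole : γ • ptQ (-d / c) = ptInf :=
      smul_ptQ_of_eq_zero hγ (by field_simp; ring)
    have hcusp : γ⁻¹ • pi' ptInf (ptQ (a / c)) (ptQ_ne_ptInf _).symm =
        pi' (ptQ (-d / c)) ptInf (ptQ_ne_ptInf _) :=
      smul_pi'_eq (inv_smul_eq_iff.2 hpole.symm)
        (inv_smul_eq_iff.2 (smul_ptInf_of_ne_zero hγ hc).symm)
    rw [smul_br, hcusp, br_sub_br]
  · intro hc
    obtain ⟨ha, hd⟩ : a ≠ 0 ∧ d ≠ 0 := by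
      simpa [hc] using det_ne_zero_of_coe_eq hγ
    have hzero : γ • ptQ (-b / a) = ptQ 0 := by
      rw [smul_ptQ_of_ne_zero hγ (by simpa [hc] using hd), mul_div_cancel₀ _ ha, neg_add_cancel,
        zero_div]
    exact congrArg (br Zinf) (smul_pi'_eq (inv_smul_eq_iff.2 (smul_ptInf_of_eq_zero hγ hc).symm)
      (inv_smul_eq_iff.2 hzero.symm))

end PaperMS
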